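/- arXiv:2210.16977 — 2 statements merged into one kernel-verified Lean document; each statement's English description precedes it below -/
import Mathlib

section
/- Let ℓ ≥ 17 be a prime with ℓ ≠ 23, let e ∈ {1,2,3,4,6}, and let M ∈ GL₂(F_ℓ) be such that M D^e M⁻¹ ⊆ N_s(ℓ), where D^e = { diag(a^e,1) : a ∈ F_ℓ^× }. Then M D^e M⁻¹ = D^e or M D^e M⁻¹ = (D^e)_f, where (D^e)_f = { diag(1, a^e) : a ∈ F_ℓ^× }. -/
/-!
Pick `t = a ^ e` with `t ^ 2 ≠ 1`, possible since `(ZMod ℓ)ˣ` is cyclic of order `ℓ - 1 > 2e`.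
Then `diag(t, 1)` has distinct eigenvalues, and `B = M diag(t, 1) M⁻¹` lies in the normalizer of the
split Cartan. `B` cannot be antidiagonal, because its square would be scalar while `t ^ 2 ≠ 1`. So `B`
is diagonal, the columns of `M` are eigenvectors of a diagonal matrix for the distinct eigenvalues
`t`, `1`, hence coordinate vectors: `M` is diagonal or antidiagonal, and conjugating by it fixes or
swaps the diagonal entries of every element of `D^e`.
-/

open Matrix

/-- The e-th power of the semi-Cartan subgroup, as a subset of GL₂. -/
def DeSet (ℓ e : ℕ) : Set (GL (Fin 2) (ZMod ℓ)) :=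
  {A | ∃ a : (ZMod ℓ)ˣ,
    (A : Matrix (Fin 2) (Fin 2) (ZMod ℓ)) = !![(a : ZMod ℓ) ^ e, 0; 0, 1]}

/-- The "flip" of the e-th power of the semi-Cartan subgroup. -/
def DeFlipSet (ℓ e : ℕ) : Set (GL (Fin 2) (ZMod ℓ)) :=
  {A | ∃ a : (ZMod ℓ)ˣ,
    (A : Matrix (Fin 2) (Fin 2) (ZMod ℓ)) = !![1, 0; 0, (a : ZMod ℓ) ^ e]}

/-- The normalizer of the split Cartan subgroup: diagonal and antidiagonal matrices. -/
def NsGL (ℓ : ℕ) : Set (GL (Fin 2) (ZMod ℓ)) :=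
  {A | ((A : Matrix (Fin 2) (Fin 2) (ZMod ℓ)) 0 1 = 0 ∧
        (A : Matrix (Fin 2) (Fin 2) (ZMod ℓ)) 1 0 = 0) ∨
       ((A : Matrix (Fin 2) (Fin 2) (ZMod ℓ)) 0 0 = 0 ∧
        (A : Matrix (Fin 2) (Fin 2) (ZMod ℓ)) 1 1 = 0)}

namespace Matrix

variable {K : Type*} [Field K]

lemma mul_diag_fin_two_of_diag {P : Matrix (Fin 2) (Fin 2) K} (h01 : P 0 1 = 0)
    (h10 : P 1 0 = 0) (x y : K) : P * !![x, 0; 0, y] = !![x, 0; 0, y] * P := by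
  rw [eta_fin_two P, h01, h10]
  simp [mul_comm]

lemma mul_diag_fin_two_of_antidiag {P : Matrix (Fin 2) (Fin 2) K} (h00 : P 0 0 = 0)
    (h11 : P 1 1 = 0) (x y : K) : P * !![x, 0; 0, y] = !![y, 0; 0, x] * P := by
  rw [eta_fin_two P, h00, h11]
  simp [mul_comm]

lemma diag_or_antidiag_of_diag_mul_eq_mul_diag {P B : Matrix (Fin 2) (Fin 2) K} {t : K}
    (hP : P.det ≠ 0) (ht : t ≠ 1) (hB01 : B 0 1 = 0) (hB10 : B 1 0 = 0)
    (hBP : B * P = P * !![t, 0; 0, 1]) :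
    (P 0 1 = 0 ∧ P 1 0 = 0) ∨ (P 0 0 = 0 ∧ P 1 1 = 0) := by
  have entry (i j : Fin 2) := congrFun (congrFun hBP i) j
  -- otherwise comparing row `i` of `B * P` and `P * diag(t, 1)` gives `B i i = t` and `B i i = 1`
  have row_has_zero (i : Fin 2) : P i 0 = 0 ∨ P i 1 = 0 := by
    by_contra! hne
    have hi0 := entry i 0
    have hi1 := entry i 1
    fin_cases i <;> simp [mul_apply, Fin.sum_univ_two, hB01, hB10] at hi0 hi1 hne <;>
      exact ht ((mul_right_cancel₀ hne.1 (hi0.trans (mul_comm _ _))).symm.trans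
        (mul_right_cancel₀ hne.2 (hi1.trans (one_mul _).symm)))
  rw [det_fin_two] at hP
  rcases row_has_zero 0 with h0 | h0 <;> rcases row_has_zero 1 with h1 | h1 <;>
    simp_all

/-- `B` antidiagonal makes `B * B` scalar, yet `B * B` is conjugate to `diag(t², 1)`. -/
lemma sq_eq_one_of_antidiag_mul_eq_mul_diag {P B : Matrix (Fin 2) (Fin 2) K} {t : K}
    (hP : P.det ≠ 0) (hB00 : B 0 0 = 0) (hB11 : B 1 1 = 0)
    (hBP : B * P = P * !![t, 0; 0, 1]) : t ^ 2 = 1 := by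
  have hB_sq : B * B = (B 0 1 * B 1 0) • 1 := by
    rw [eta_fin_two B, hB00, hB11]
    simp [one_fin_two, mul_comm]
  have hPunit : IsUnit P := (isUnit_iff_isUnit_det P).mpr (isUnit_iff_ne_zero.mpr hP)
  have hscalar : (B 0 1 * B 1 0) • (1 : Matrix (Fin 2) (Fin 2) K) = !![t ^ 2, 0; 0, 1] := by
    refine hPunit.mul_left_cancel ?_
    calc P * ((B 0 1 * B 1 0) • 1) = B * B * P := by
          rw [hB_sq, smul_mul_assoc, mul_smul_comm]; simp
      _ = P * (!![t, 0; 0, 1] * !![t, 0; 0, 1]) := by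
          rw [mul_assoc, hBP, ← mul_assoc, hBP, mul_assoc]
      _ = P * !![t ^ 2, 0; 0, 1] := by simp [sq]
  have h00 : B 0 1 * B 1 0 = t ^ 2 := by simpa using congrFun (congrFun hscalar 0) 0
  have h11 : B 0 1 * B 1 0 = 1 := by simpa using congrFun (congrFun hscalar 1) 1
  rw [← h00, h11]

lemma diag_or_antidiag_of_mul_eq_mul_diag {P B : Matrix (Fin 2) (Fin 2) K} {t : K}
    (hP : P.det ≠ 0) (ht : t ^ 2 ≠ 1) (hB : (B 0 1 = 0 ∧ B 1 0 = 0) ∨ (B 0 0 = 0 ∧ B 1 1 = 0))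
    (hBP : B * P = P * !![t, 0; 0, 1]) :
    (P 0 1 = 0 ∧ P 1 0 = 0) ∨ (P 0 0 = 0 ∧ P 1 1 = 0) := by
  rcases hB with ⟨hB01, hB10⟩ | ⟨hB00, hB11⟩
  · exact diag_or_antidiag_of_diag_mul_eq_mul_diag hP (by rintro rfl; simp at ht) hB01 hB10 hBP
  · exact absurd (sq_eq_one_of_antidiag_mul_eq_mul_diag hP hB00 hB11 hBP) ht

end Matrix

lemma image_conj_setOf_val_eq {n R ι : Type*} [Fintype n] [DecidableEq n] [CommRing R]
    (M : GL n R) (f g : ι → Matrix n n R) (h : ∀ i, (M : Matrix n n R) * f i = g i * M) :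
    (fun A => M * A * M⁻¹) '' {A : GL n R | ∃ i, (A : Matrix n n R) = f i} =
      {A : GL n R | ∃ i, (A : Matrix n n R) = g i} := by
  ext X
  constructor
  · rintro ⟨A, ⟨i, hA⟩, rfl⟩
    exact ⟨i, by rw [Units.val_mul, Units.val_mul, hA, h i, mul_assoc, Units.mul_inv, mul_one]⟩
  · rintro ⟨i, hX⟩
    refine ⟨M⁻¹ * X * M, ⟨i, ?_⟩, by group⟩
    simp [Units.val_mul, hX, mul_assoc, ← h i]

lemma exists_pow_ne_one_of_lt_card {G : Type*} [Group G] [Finite G] [IsCyclic G] {k : ℕ}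
    (hk0 : 0 < k) (hk : k < Nat.card G) : ∃ g : G, g ^ k ≠ 1 := by
  obtain ⟨g, hg⟩ := IsCyclic.exists_ofOrder_eq_natCard (α := G)
  exact ⟨g, pow_ne_one_of_lt_orderOf hk0.ne' (hg ▸ hk)⟩

lemma exists_mem_DeSet_val_eq_sq_ne_one (ℓ e : ℕ) [Fact ℓ.Prime] (he0 : 0 < e)
    (he : 2 * e < ℓ - 1) :
    ∃ A ∈ DeSet ℓ e, ∃ t : ZMod ℓ, (A : Matrix (Fin 2) (Fin 2) (ZMod ℓ)) = !![t, 0; 0, 1] ∧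
      t ^ 2 ≠ 1 := by
  obtain ⟨a, ha⟩ := exists_pow_ne_one_of_lt_card (G := (ZMod ℓ)ˣ) (k := 2 * e) (by omega)
    (by rwa [Nat.card_eq_fintype_card, ZMod.card_units])
  refine ⟨GeneralLinearGroup.mkOfDetNeZero !![(a : ZMod ℓ) ^ e, 0; 0, 1] (by simp), ⟨a, rfl⟩,
    _, rfl, ?_⟩
  rwa [← pow_mul, mul_comm, ← Units.val_pow_eq_pow_val, Ne, Units.val_eq_one]

theorem stmt12_general (ℓ e : ℕ) (hp : ℓ.Prime) (h17 : 17 ≤ ℓ)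
    (he : e ∈ ({1, 2, 3, 4, 6} : Set ℕ)) (M : GL (Fin 2) (ZMod ℓ))
    (hconj : (fun A => M * A * M⁻¹) '' DeSet ℓ e ⊆ NsGL ℓ) :
    (fun A => M * A * M⁻¹) '' DeSet ℓ e = DeSet ℓ e ∨
    (fun A => M * A * M⁻¹) '' DeSet ℓ e = DeFlipSet ℓ e := by
  have : Fact ℓ.Prime := ⟨hp⟩
  have he_bounds : 0 < e ∧ 2 * e < ℓ - 1 := by
    simp only [Set.mem_insert_iff, Set.mem_singleton_iff] at he
    omega
  obtain ⟨A, hA, t, hAt, ht⟩ := exists_mem_DeSet_val_eq_sq_ne_one ℓ e he_bounds.1 he_bounds.2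
  have hconjA : ((M * A * M⁻¹ : GL (Fin 2) (ZMod ℓ)) : Matrix (Fin 2) (Fin 2) (ZMod ℓ)) * M =
      M * !![t, 0; 0, 1] := by
    rw [← hAt, Units.val_mul, Units.val_mul, mul_assoc, Units.inv_mul, mul_one]
  have hdet : (M : Matrix (Fin 2) (Fin 2) (ZMod ℓ)).det ≠ 0 :=
    ((isUnit_iff_isUnit_det _).mp M.isUnit).ne_zero
  rcases diag_or_antidiag_of_mul_eq_mul_diag hdet ht (hconj ⟨A, hA, rfl⟩) hconjA with
    ⟨h01, h10⟩ | ⟨h00, h11⟩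
  · exact .inl (image_conj_setOf_val_eq M _ _ fun _ => mul_diag_fin_two_of_diag h01 h10 _ _)
  · exact .inr (image_conj_setOf_val_eq M _ _ fun _ => mul_diag_fin_two_of_antidiag h00 h11 _ _)

theorem stmt12 (ℓ e : ℕ) (hp : ℓ.Prime) (h17 : 17 ≤ ℓ) (h23 : ℓ ≠ 23)
    (he : e ∈ ({1, 2, 3, 4, 6} : Set ℕ)) (M : GL (Fin 2) (ZMod ℓ))
    (hconj : (fun A => M * A * M⁻¹) '' DeSet ℓ e ⊆ NsGL ℓ) :
    (fun A => M * A * M⁻¹) '' DeSet ℓ e = DeSet ℓ e ∨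
    (fun A => M * A * M⁻¹) '' DeSet ℓ e = DeFlipSet ℓ e :=
  stmt12_general ℓ e hp h17 he M hconj
end

section
/- Let F₀ ⊆ L be fields with L/F₀ algebraic, let E be an elliptic curve over F₀, and suppose ℓ is a prime and n ≥ 1 an integer such that E(L)[ℓ^k] = E(F₀)[ℓ^k] for all k < n. If R ∈ E(L) is a point of exact order ℓⁿ and [L : F₀] is coprime to ℓ(ℓ−1), then R ∈ E(F₀). (Here one uses that [F₀(R) : F₀(ℓR)] divides ℓ² or ℓ(ℓ−1).) -/
/-! Since `ℓ • R` has order `ℓ ^ (n - 1)`, the hypothesis on torsion makes it `F₀`-rational, so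
`[F₀(R) : F₀] = [F₀(R) : F₀(ℓR)]` divides both `[L : F₀]` and `ℓ²` or `ℓ(ℓ - 1)`; coprimality
forces it to be `1`, i.e. `R` is `F₀`-rational. -/

open WeierstrassCurve WeierstrassCurve.Affine WeierstrassCurve.Affine.Point

/-- The field of definition `F₀(R)` of a rational point `R` on a Weierstrass curve
base-changed to `L`: the intermediate field of `L/F₀` generated by its coordinates. -/
noncomputable def fieldOfDef {F₀ L : Type*} [Field F₀] [Field L] [Algebra F₀ L]
    {W : WeierstrassCurve F₀} : (W⁄L).Point → IntermediateField F₀ L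
  | .zero => ⊥
  | .some (x := x) (y := y) _ => IntermediateField.adjoin F₀ {x, y}

lemma Nat.eq_one_of_coprime_mul_of_dvd_sq_or_dvd_mul {m a b : ℕ} (h : m.Coprime (a * b))
    (hm : m ∣ a ^ 2 ∨ m ∣ a * b) : m = 1 := by
  rcases hm with hm | hm
  · exact ((Nat.Coprime.coprime_mul_right_right h).pow_right 2).eq_one_of_dvd hm
  · exact h.eq_one_of_dvd hm

section FieldOfDef

variable {F₀ L : Type*} [Field F₀] [Field L] [Algebra F₀ L] {W : WeierstrassCurve F₀}

lemma finrank_fieldOfDef_dvd (P : (W⁄L).Point) :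
    Module.finrank F₀ (fieldOfDef P) ∣ Module.finrank F₀ L :=
  ⟨_, (Module.finrank_mul_finrank F₀ (fieldOfDef P) L).symm⟩

open Classical in
lemma fieldOfDef_eq_bot_iff (P : (W⁄L).Point) :
    fieldOfDef P = ⊥ ↔ ∃ Q : (W⁄F₀).Point, Point.map (W' := W) (Algebra.ofId F₀ L) Q = P := by
  constructor
  · intro hP
    cases P with
    | zero => exact ⟨0, rfl⟩
    | some x y h =>
      have hmem : ∀ z ∈ ({x, y} : Set L), z ∈ (⊥ : IntermediateField F₀ L) := fun z hz =>
        hP ▸ IntermediateField.subset_adjoin F₀ _ hz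
      obtain ⟨x₀, rfl⟩ := IntermediateField.mem_bot.mp (hmem x (by simp))
      obtain ⟨y₀, rfl⟩ := IntermediateField.mem_bot.mp (hmem y (by simp))
      exact ⟨.some _ _
        ((baseChange_nonsingular (W := W) (Algebra.ofId F₀ L).injective x₀ y₀).mp h), rfl⟩
  · rintro ⟨Q, rfl⟩
    cases Q with
    | zero => rfl
    | some h =>
      show IntermediateField.adjoin F₀ _ = ⊥
      rw [← le_bot_iff, IntermediateField.adjoin_le_iff]
      rintro z (rfl | rfl) <;> exact IntermediateField.algebraMap_mem ⊥ _

end FieldOfDef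

open Classical in
theorem stmt19_general {F₀ L : Type*} [Field F₀] [Field L] [Algebra F₀ L]
    (W : WeierstrassCurve F₀)
    (ℓ n : ℕ) (hn : 1 ≤ n)
    (hIH : ∀ k < n, ∀ P : (W⁄L).Point, ℓ ^ k • P = 0 →
      ∃ Q : (W⁄F₀).Point, Point.map (W' := W) (Algebra.ofId F₀ L) Q = P)
    (R : (W⁄L).Point) (hR : addOrderOf R = ℓ ^ n)
    (hdeg : ∃ m : ℕ, (m ∣ ℓ ^ 2 ∨ m ∣ ℓ * (ℓ - 1)) ∧
      Module.finrank F₀ (fieldOfDef R) = m * Module.finrank F₀ (fieldOfDef (ℓ • R)))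
    (hcop : Nat.Coprime (Module.finrank F₀ L) (ℓ * (ℓ - 1))) :
    ∃ Q : (W⁄F₀).Point, Point.map (W' := W) (Algebra.ofId F₀ L) Q = R := by
  obtain ⟨m, hm, hrank⟩ := hdeg
  have hkill : ℓ ^ (n - 1) • (ℓ • R) = 0 := by
    rw [smul_smul, ← pow_succ, Nat.sub_add_cancel hn, ← hR]
    exact addOrderOf_nsmul_eq_zero R
  have hℓR : fieldOfDef (ℓ • R) = ⊥ :=
    (fieldOfDef_eq_bot_iff _).mpr (hIH (n - 1) (by omega) (ℓ • R) hkill)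
  rw [IntermediateField.finrank_eq_one_iff.mpr hℓR, mul_one] at hrank
  have hmL : m ∣ Module.finrank F₀ L := hrank ▸ finrank_fieldOfDef_dvd R
  have hm1 : m = 1 :=
    Nat.eq_one_of_coprime_mul_of_dvd_sq_or_dvd_mul (hcop.coprime_dvd_left hmL) hm
  exact (fieldOfDef_eq_bot_iff R).mp (IntermediateField.finrank_eq_one_iff.mp (hm1 ▸ hrank))

open Classical in
theorem stmt19 {F₀ L : Type*} [Field F₀] [Field L] [Algebra F₀ L] [CharZero F₀]
    [FiniteDimensional F₀ L]
    (W : WeierstrassCurve F₀) [W.IsElliptic]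
    (ℓ n : ℕ) (hℓ : ℓ.Prime) (hn : 1 ≤ n)
    (hIH : ∀ k < n, ∀ P : (W⁄L).Point, ℓ ^ k • P = 0 →
      ∃ Q : (W⁄F₀).Point, Point.map (W' := W) (Algebra.ofId F₀ L) Q = P)
    (R : (W⁄L).Point) (hR : addOrderOf R = ℓ ^ n)
    (hdeg : ∃ m : ℕ, (m ∣ ℓ ^ 2 ∨ m ∣ ℓ * (ℓ - 1)) ∧
      Module.finrank F₀ (fieldOfDef R) = m * Module.finrank F₀ (fieldOfDef (ℓ • R)))
    (hcop : Nat.Coprime (Module.finrank F₀ L) (ℓ * (ℓ - 1))) :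
    ∃ Q : (W⁄F₀).Point, Point.map (W' := W) (Algebra.ofId F₀ L) Q = R :=
  stmt19_general W ℓ n hn hIH R hR hdeg hcop
end
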